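/- arXiv:1508.06379 — 2 statements merged into one kernel-verified Lean document; each statement's English description precedes it below -/
import Mathlib

section
/- Consider particles with positions $x_i(t) \in \mathbb{R}^2$ and circulations $\Gamma_i(t)$ evolving by $\dot{x}_i = \sum_j K(x_j - x_i)\Gamma_j$ and $\dot{\Gamma}_i = \nu \sum_j f_{ji}\Gamma_j$, where $K$ is the Biot--Savart kernel and the stencil satisfies for all $i$: $\sum_j f_{ij} = 0$, $\sum_j f_{ij}(x_j - x_i) = 0$, and $\sum_j f_{ij}|x_j - x_i|^2 = 4$. Then the angular momentum $I_2(t) = \sum_i \Gamma_i(t)|x_i(t)|^2$ satisfies $\frac{d}{dt} I_2 = 4\nu I_0$, where $I_0 = \sum_i \Gamma_i$. -/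
/-!
Differentiating `I₂ = ∑ Γᵢ |xᵢ|²` gives a diffusion term and a convection term. The convection
term is the double sum `∑ᵢ ∑ⱼ Γᵢ Γⱼ xᵢ · K(xⱼ - xᵢ)`, which is antisymmetric in `(i, j)`: since `K` is
odd, swapping gives `-Γᵢ Γⱼ xⱼ · K(xⱼ - xᵢ)`, and `(xⱼ - xᵢ) · K(xⱼ - xᵢ) = 0`; so it vanishes. In the
diffusion term, expanding `|xᵢ|²` around `xⱼ` in each stencil row, the zeroth and first moment
conditions leave only the second moment, so every row contributes `4`.
-/

open Real

/-- The two-dimensional Biot--Savart kernel. -/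
noncomputable def biotSavart (z : ℝ × ℝ) : ℝ × ℝ :=
  if z = 0 then 0
  else (z.2 / (2 * π * (z.1^2 + z.2^2)), -z.1 / (2 * π * (z.1^2 + z.2^2)))

open Finset

theorem Finset.sum_sum_eq_zero_of_antisymm {ι G : Type*} [AddCommGroup G] [IsAddTorsionFree G]
    (s : Finset ι) (g : ι → ι → G) (hg : ∀ i j, g j i = -g i j) :
    ∑ i ∈ s, ∑ j ∈ s, g i j = 0 := by
  refine self_eq_neg.mp ?_
  calc ∑ i ∈ s, ∑ j ∈ s, g i j = ∑ j ∈ s, ∑ i ∈ s, g i j := sum_comm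
    _ = -∑ i ∈ s, ∑ j ∈ s, g i j := by
      simp only [← sum_neg_distrib]
      exact sum_congr rfl fun i _ => sum_congr rfl fun j _ => hg i j

theorem sum_mul_sq_eq_of_moments {ι R : Type*} [CommRing R] (s : Finset ι) (w y : ι → R) (c : R)
    (h0 : ∑ i ∈ s, w i = 0) (h1 : ∑ i ∈ s, w i * (y i - c) = 0) :
    ∑ i ∈ s, w i * y i ^ 2 = ∑ i ∈ s, w i * (y i - c) ^ 2 := by
  have key : ∀ i, w i * y i ^ 2 = w i * (y i - c) ^ 2 + 2 * c * (w i * (y i - c)) + c ^ 2 * w i :=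
    fun i => by ring
  simp only [key, sum_add_distrib, ← mul_sum, h0, h1, mul_zero, add_zero]

theorem biotSavart_neg (z : ℝ × ℝ) : biotSavart (-z) = -biotSavart z := by
  by_cases hz : z = 0
  · simp [biotSavart, hz]
  · simp only [biotSavart, neg_eq_zero, hz, if_false, Prod.fst_neg, Prod.snd_neg, neg_sq,
      Prod.neg_mk]
    ring_nf

theorem biotSavart_orthogonal (z : ℝ × ℝ) :
    z.1 * (biotSavart z).1 + z.2 * (biotSavart z).2 = 0 := by
  unfold biotSavart
  split_ifs
  · simp only [Prod.fst_zero, Prod.snd_zero, mul_zero, add_zero]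
  · ring

theorem biotSavart_pair_cancel (a b : ℝ × ℝ) :
    a.1 * (biotSavart (b - a)).1 + a.2 * (biotSavart (b - a)).2
      = -(b.1 * (biotSavart (a - b)).1 + b.2 * (biotSavart (a - b)).2) := by
  have h := biotSavart_orthogonal (b - a)
  rw [← neg_sub b a, biotSavart_neg]
  simp only [Prod.fst_sub, Prod.snd_sub, Prod.fst_neg, Prod.snd_neg] at h ⊢
  linear_combination -h

theorem sum_mul_biotSavart_inner_eq_zero {ι : Type*} [Fintype ι] (x : ι → ℝ × ℝ) (Γ : ι → ℝ) :
    ∑ i, Γ i * ((x i).1 * (∑ j, Γ j • biotSavart (x j - x i)).1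
      + (x i).2 * (∑ j, Γ j • biotSavart (x j - x i)).2) = 0 := by
  have expand : ∀ i, Γ i * ((x i).1 * (∑ j, Γ j • biotSavart (x j - x i)).1
      + (x i).2 * (∑ j, Γ j • biotSavart (x j - x i)).2)
      = ∑ j, Γ i * Γ j * ((x i).1 * (biotSavart (x j - x i)).1
        + (x i).2 * (biotSavart (x j - x i)).2) := by
    intro i
    simp only [Prod.fst_sum, Prod.snd_sum, Prod.smul_fst, Prod.smul_snd, smul_eq_mul, mul_sum,
      ← sum_add_distrib]
    exact sum_congr rfl fun j _ => by ring
  simp only [expand]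
  refine sum_sum_eq_zero_of_antisymm _ _ fun i j => ?_
  rw [biotSavart_pair_cancel (x j) (x i)]
  ring

theorem sum_mul_sq_norm_eq_of_moments {ι : Type*} (s : Finset ι) (w : ι → ℝ) (y : ι → ℝ × ℝ)
    (c : ℝ × ℝ) (h0 : ∑ i ∈ s, w i = 0) (h1 : ∑ i ∈ s, w i • (y i - c) = 0) :
    ∑ i ∈ s, w i * ((y i).1 ^ 2 + (y i).2 ^ 2)
      = ∑ i ∈ s, w i * (((y i).1 - c.1) ^ 2 + ((y i).2 - c.2) ^ 2) := by
  have h1fst : ∑ i ∈ s, w i * ((y i).1 - c.1) = 0 := by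
    simpa only [Prod.fst_sum, Prod.smul_fst, Prod.fst_sub, smul_eq_mul, Prod.fst_zero] using
      congrArg Prod.fst h1
  have h1snd : ∑ i ∈ s, w i * ((y i).2 - c.2) = 0 := by
    simpa only [Prod.snd_sum, Prod.smul_snd, Prod.snd_sub, smul_eq_mul, Prod.snd_zero] using
      congrArg Prod.snd h1
  simp only [mul_add, sum_add_distrib, sum_mul_sq_eq_of_moments s w _ _ h0 h1fst,
    sum_mul_sq_eq_of_moments s w _ _ h0 h1snd]

theorem sum_diffusion_mul_sq_norm {ι : Type*} [Fintype ι] (ν : ℝ) (x : ι → ℝ × ℝ) (Γ : ι → ℝ)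
    (f : ι → ι → ℝ) (hmom0 : ∀ i, ∑ j, f i j = 0) (hmom1 : ∀ i, ∑ j, f i j • (x j - x i) = 0)
    (hmom2 : ∀ i, ∑ j, f i j * (((x j).1 - (x i).1) ^ 2 + ((x j).2 - (x i).2) ^ 2) = 4) :
    ∑ i, (ν * ∑ j, f j i * Γ j) * ((x i).1 ^ 2 + (x i).2 ^ 2) = 4 * ν * ∑ i, Γ i := by
  have row : ∀ j, ∑ i, f j i * ((x i).1 ^ 2 + (x i).2 ^ 2) = 4 := fun j => by
    rw [sum_mul_sq_norm_eq_of_moments _ _ _ (x j) (hmom0 j) (hmom1 j), hmom2 j]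
  calc ∑ i, (ν * ∑ j, f j i * Γ j) * ((x i).1 ^ 2 + (x i).2 ^ 2)
      = ∑ j, ν * Γ j * ∑ i, f j i * ((x i).1 ^ 2 + (x i).2 ^ 2) := by
        simp only [mul_sum, sum_mul]
        rw [sum_comm]
        exact sum_congr rfl fun j _ => sum_congr rfl fun i _ => by ring
    _ = 4 * ν * ∑ i, Γ i := by simp only [row, mul_sum]; exact sum_congr rfl fun j _ => by ring

theorem HasDerivAt.fst_sq_add_snd_sq {p : ℝ → ℝ × ℝ} {p' : ℝ × ℝ} {t : ℝ}
    (hp : HasDerivAt p p' t) :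
    HasDerivAt (fun s => (p s).1 ^ 2 + (p s).2 ^ 2) (2 * ((p t).1 * p'.1 + (p t).2 * p'.2)) t := by
  have h1 : HasDerivAt (fun s => (p s).1) p'.1 t :=
    (ContinuousLinearMap.fst ℝ ℝ ℝ).hasFDerivAt.comp_hasDerivAt t hp
  have h2 : HasDerivAt (fun s => (p s).2) p'.2 t :=
    (ContinuousLinearMap.snd ℝ ℝ ℝ).hasFDerivAt.comp_hasDerivAt t hp
  refine ((h1.fun_pow 2).fun_add (h2.fun_pow 2)).congr_deriv ?_
  push_cast
  ring

theorem stmt_7_general {N : ℕ} (ν : ℝ)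
    (x : ℝ → Fin N → ℝ × ℝ) (Γ : ℝ → Fin N → ℝ) (f : ℝ → Fin N → Fin N → ℝ)
    (hx : ∀ i t, HasDerivAt (fun s => x s i)
      (∑ j, Γ t j • biotSavart (x t j - x t i)) t)
    (hΓ : ∀ i t, HasDerivAt (fun s => Γ s i) (ν * ∑ j, f t j i * Γ t j) t)
    (hmom0 : ∀ t i, ∑ j, f t i j = 0)
    (hmom1 : ∀ t i, ∑ j, f t i j • (x t j - x t i) = (0 : ℝ × ℝ))
    (hmom2 : ∀ t i, ∑ j, f t i j *
      (((x t j).1 - (x t i).1)^2 + ((x t j).2 - (x t i).2)^2) = 4) :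
    ∀ t, HasDerivAt (fun s => ∑ i, Γ s i * ((x s i).1^2 + (x s i).2^2))
      (4 * ν * ∑ i, Γ t i) t := by
  intro t
  refine (HasDerivAt.fun_sum fun i (_ : i ∈ univ) =>
    (hΓ i t).fun_mul (hx i t).fst_sq_add_snd_sq).congr_deriv ?_
  simp only [sum_add_distrib, mul_left_comm (Γ t _) 2, ← mul_sum,
    sum_diffusion_mul_sq_norm ν (x t) (Γ t) (f t) (hmom0 t) (hmom1 t) (hmom2 t),
    sum_mul_biotSavart_inner_eq_zero, mul_zero, add_zero]

/-- The angular momentum `I₂ = ∑ Γ_i |x_i|²` of the coupled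
convection–diffusion system satisfies `dI₂/dt = 4 ν I₀` where
`I₀ = ∑ Γ_i`, given moment conditions up to second order. -/
theorem stmt_7 {N : ℕ} (ν : ℝ) (hν : 0 ≤ ν)
    (x : ℝ → Fin N → ℝ × ℝ) (Γ : ℝ → Fin N → ℝ) (f : ℝ → Fin N → Fin N → ℝ)
    (hx : ∀ i t, HasDerivAt (fun s => x s i)
      (∑ j, Γ t j • biotSavart (x t j - x t i)) t)
    (hΓ : ∀ i t, HasDerivAt (fun s => Γ s i) (ν * ∑ j, f t j i * Γ t j) t)
    (hmom0 : ∀ t i, ∑ j, f t i j = 0)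
    (hmom1 : ∀ t i, ∑ j, f t i j • (x t j - x t i) = (0 : ℝ × ℝ))
    (hmom2 : ∀ t i, ∑ j, f t i j *
      (((x t j).1 - (x t i).1)^2 + ((x t j).2 - (x t i).2)^2) = 4) :
    ∀ t, HasDerivAt (fun s => ∑ i, Γ s i * ((x s i).1^2 + (x s i).2^2))
      (4 * ν * ∑ i, Γ t i) t :=
  stmt_7_general ν x Γ f hx hΓ hmom0 hmom1 hmom2
end

section
/- Suppose the set $\mathcal{I}$ of excluded particles is chosen so that $\sum_{i \in \mathcal{I}} |\Gamma_i| \leq C_{diff} h^{n+2} \sum_i |\Gamma_i|$. Combining the consistency estimate and the reduction estimate, the reduced discrete Laplacian satisfies, for every $\varphi \in C^{n+2}$ with bounded derivatives, $|\langle \Delta\omega - \tilde{\Delta}_h\omega, \varphi\rangle| \leq \left(4 C_\alpha \frac{R^{n+2}}{r^2} \max_{|\beta|=n+2}\|D^\beta\varphi\|_\infty + 8 C_{diff} r^{-2} \|\varphi\|_\infty \right) h^n \sum_i |\Gamma_i|$, i.e., the reduction preserves the $O(h^n)$ order of consistency. -/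
/-!
Expanding `φ` about `xᵢ` to order `n + 1`, the moment conditions make the stencil annihilate every
Taylor monomial except the quadratic ones, on which it reproduces `Δφ(xᵢ)`. So the consistency
error at `xᵢ` is the stencil applied to the Lagrange remainder, which is at most `C_α M (Rh)^{n+2}`
on the support, while the second moments and the inner radius `rh` bound the off-diagonal stencil
mass by `4 / (rh)²`; this gives the first term. As the rows sum to zero, an excluded particle
contributes at most `|Γᵢ| · 4 / (rh)² · 2B`, and the budget on `∑_{i∈I} |Γᵢ|` gives the second.

The two-variable Taylor formula comes from the one-variable one along `t ↦ p + t • v`, whose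
derivatives are iterated directional derivatives, expanded binomially into the mixed partials.
-/

/-- Mixed partial derivative `D^(a,b) φ` of a function on `ℝ²`. -/
noncomputable def pd (a b : ℕ) (φ : ℝ × ℝ → ℝ) : ℝ × ℝ → ℝ :=
  fun p => iteratedDeriv a (fun s => iteratedDeriv b (fun t => φ (s, t)) p.2) p.1

open Finset

noncomputable def dirDeriv {E : Type*} [NormedAddCommGroup E] [NormedSpace ℝ E] (v : E)
    (f : E → ℝ) : E → ℝ :=
  fun x => fderiv ℝ f x v

section DirDeriv

variable {E : Type*} [NormedAddCommGroup E] [NormedSpace ℝ E]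

theorem contDiff_dirDeriv {m : ℕ} {f : E → ℝ} (hf : ContDiff ℝ (m + 1 : ℕ) f) (v : E) :
    ContDiff ℝ m (dirDeriv v f) :=
  (hf.fderiv_right (by norm_cast)).clm_apply contDiff_const

theorem contDiff_iterate_dirDeriv {m k : ℕ} {f : E → ℝ} (hf : ContDiff ℝ (m + k : ℕ) f)
    (v : E) : ContDiff ℝ m ((dirDeriv v)^[k] f) := by
  induction k generalizing f with
  | zero => exact hf
  | succ k ih => exact ih (contDiff_dirDeriv hf v)

theorem iteratedDeriv_comp_add_smul {k : ℕ} {f : E → ℝ} (hf : ContDiff ℝ k f) (c v : E) :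
    iteratedDeriv k (fun t : ℝ => f (c + t • v)) = fun t => (dirDeriv v)^[k] f (c + t • v) := by
  induction k generalizing f with
  | zero => rfl
  | succ k ih =>
    have hderiv : deriv (fun t : ℝ => f (c + t • v)) = fun t => dirDeriv v f (c + t • v) := by
      funext t
      have hline : HasDerivAt (fun t : ℝ => c + t • v) v t := by
        simpa using ((hasDerivAt_id t).smul_const v).const_add c
      exact ((hf.differentiable (by simp) _).hasFDerivAt.comp_hasDerivAt t hline).deriv
    rw [iteratedDeriv_succ', hderiv, ih (contDiff_dirDeriv hf v)]
    rfl

theorem dirDeriv_comm {f : E → ℝ} (hf : ContDiff ℝ 2 f) (v w : E) :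
    dirDeriv v (dirDeriv w f) = dirDeriv w (dirDeriv v f) := by
  funext x
  have hsymm : IsSymmSndFDerivAt ℝ f x :=
    hf.contDiffAt.isSymmSndFDerivAt (by simp [minSmoothness_of_isRCLikeNormedField])
  have hdf : DifferentiableAt ℝ (fderiv ℝ f) x :=
    (hf.fderiv_right (m := 1) (by norm_num)).differentiable one_ne_zero x
  have hsnd : ∀ u u', dirDeriv u (dirDeriv u' f) x = fderiv ℝ (fderiv ℝ f) x u u' := by
    intro u u'
    change fderiv ℝ (fun y => fderiv ℝ f y u') x u = _
    rw [fderiv_clm_apply hdf (differentiableAt_const u')]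
    simp
  rw [hsnd, hsnd, hsymm.eq]

theorem dirDeriv_iterate_comm {a : ℕ} {f : E → ℝ} (hf : ContDiff ℝ (a + 1 : ℕ) f) (v w : E) :
    dirDeriv w ((dirDeriv v)^[a] f) = (dirDeriv v)^[a] (dirDeriv w f) := by
  induction a generalizing f with
  | zero => rfl
  | succ a ih =>
    rw [Function.iterate_succ_apply, Function.iterate_succ_apply, ih (contDiff_dirDeriv hf v),
      dirDeriv_comm (hf.of_le (by norm_cast; omega)) w v]

theorem dirDeriv_sum {ι : Type*} (s : Finset ι) (c : ι → ℝ) {g : ι → E → ℝ}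
    (hg : ∀ i ∈ s, Differentiable ℝ (g i)) (v : E) :
    dirDeriv v (fun x => ∑ i ∈ s, c i * g i x) = fun x => ∑ i ∈ s, c i * dirDeriv v (g i) x := by
  funext x
  have := HasFDerivAt.fun_sum fun i hi => ((hg i hi x).hasFDerivAt.const_mul (c i))
  simp [dirDeriv, this.fderiv]

end DirDeriv

theorem dirDeriv_eq_fst_add_snd (f : ℝ × ℝ → ℝ) (v : ℝ × ℝ) :
    dirDeriv v f = fun x => v.1 * dirDeriv (1, 0) f x + v.2 * dirDeriv (0, 1) f x := by
  funext x
  have hv : v = v.1 • ((1 : ℝ), (0 : ℝ)) + v.2 • ((0 : ℝ), (1 : ℝ)) := by ext <;> simp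
  change fderiv ℝ f x v = _
  nth_rewrite 1 [hv]
  simp only [dirDeriv, map_add, map_smul, smul_eq_mul]

theorem iterate_dirDeriv_eq_sum_antidiagonal {k : ℕ} {f : ℝ × ℝ → ℝ} (hf : ContDiff ℝ k f)
    (v : ℝ × ℝ) :
    (dirDeriv v)^[k] f = fun x => ∑ ij ∈ antidiagonal k,
      k.choose ij.1 * v.1 ^ ij.1 * v.2 ^ ij.2 *
        (dirDeriv (1, 0))^[ij.1] ((dirDeriv (0, 1))^[ij.2] f) x := by
  induction k with
  | zero => funext x; simp
  | succ k ih =>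
    set F : ℕ → ℕ → ℝ × ℝ → ℝ := fun a b => (dirDeriv (1, 0))^[a] ((dirDeriv (0, 1))^[b] f)
    have hsmooth : ∀ ij ∈ antidiagonal k,
        ContDiff ℝ (ij.1 + 1 : ℕ) ((dirDeriv (0, 1))^[ij.2] f) := by
      intro ij hij
      refine contDiff_iterate_dirDeriv (hf.of_le ?_) _
      rw [HasAntidiagonal.mem_antidiagonal] at hij
      norm_cast
      omega
    have hdiff : ∀ ij ∈ antidiagonal k, Differentiable ℝ (F ij.1 ij.2) := fun ij hij =>
      (contDiff_iterate_dirDeriv (m := 1) (by rw [Nat.add_comm]; exact hsmooth ij hij) _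
        ).differentiable one_ne_zero
    have hfst : ∀ a b, dirDeriv (1, 0) (F a b) = F (a + 1) b := fun a b =>
      (Function.iterate_succ_apply' _ _ _).symm
    have hsnd : ∀ ij ∈ antidiagonal k, dirDeriv (0, 1) (F ij.1 ij.2) = F ij.1 (ij.2 + 1) := by
      intro ij hij
      simp only [F, Function.iterate_succ_apply']
      exact dirDeriv_iterate_comm (hsmooth ij hij) _ _
    rw [Function.iterate_succ_apply', ih (hf.of_le (by norm_cast; omega)), dirDeriv_sum _ _ hdiff]
    funext x
    simp only [dirDeriv_eq_fst_add_snd _ v]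
    simp only [mul_assoc (((k + 1).choose _ : ℕ) : ℝ)]
    rw [sum_antidiagonal_choose_succ_mul (fun a b => v.1 ^ a * v.2 ^ b * F a b x), add_comm,
      ← sum_add_distrib]
    refine sum_congr rfl fun ij hij => ?_
    rw [hfst, hsnd ij hij, Nat.choose_symm_of_eq_add (HasAntidiagonal.mem_antidiagonal.1 hij).symm]
    ring

theorem pd_eq_iterate_dirDeriv {a b : ℕ} {φ : ℝ × ℝ → ℝ} (hφ : ContDiff ℝ (a + b : ℕ) φ) :
    pd a b φ = (dirDeriv (1, 0))^[a] ((dirDeriv (0, 1))^[b] φ) := by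
  funext p
  have hvert : ∀ s : ℝ, (fun t => φ (s, t)) = fun t : ℝ => φ ((s, 0) + t • ((0 : ℝ), (1 : ℝ))) :=
    fun s => by funext t; simp
  have hhor : ∀ g : ℝ × ℝ → ℝ,
      (fun s => g (s, p.2)) = fun s : ℝ => g ((0, p.2) + s • ((1 : ℝ), (0 : ℝ))) :=
    fun g => by funext s; simp
  have hinner : (fun s => iteratedDeriv b (fun t => φ (s, t)) p.2) =
      fun s => (dirDeriv (0, 1))^[b] φ (s, p.2) := by
    funext s
    rw [hvert s, iteratedDeriv_comp_add_smul (hφ.of_le (by norm_cast; omega))]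
    simp
  simp only [pd]
  rw [hinner, hhor, iteratedDeriv_comp_add_smul (contDiff_iterate_dirDeriv hφ _)]
  simp

theorem iteratedDeriv_comp_add_smul_div_factorial {k : ℕ} {φ : ℝ × ℝ → ℝ} (hφ : ContDiff ℝ k φ)
    (c v : ℝ × ℝ) (t : ℝ) :
    iteratedDeriv k (fun t : ℝ => φ (c + t • v)) t / k.factorial =
      ∑ ij ∈ antidiagonal k, v.1 ^ ij.1 * v.2 ^ ij.2 / (ij.1.factorial * ij.2.factorial) *
        pd ij.1 ij.2 φ (c + t • v) := by
  rw [iteratedDeriv_comp_add_smul hφ, iterate_dirDeriv_eq_sum_antidiagonal hφ, sum_div]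
  refine sum_congr rfl fun ij hij => ?_
  obtain ⟨a, b⟩ := ij
  obtain rfl : a + b = k := HasAntidiagonal.mem_antidiagonal.1 hij
  have hfact : ((a + b).choose a : ℝ) * a.factorial * b.factorial = (a + b).factorial := by
    rw [Nat.choose_symm_add]
    exact_mod_cast Nat.add_choose_mul_factorial_mul_factorial a b
  rw [pd_eq_iterate_dirDeriv hφ]
  field_simp
  rw [← hfact]
  ring

/-- The degree-`m` Taylor polynomial of `φ` at `p`, evaluated at `p + v`. -/
noncomputable def taylorEval₂ (m : ℕ) (φ : ℝ × ℝ → ℝ) (p v : ℝ × ℝ) : ℝ :=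
  ∑ k ∈ range (m + 1), ∑ ij ∈ antidiagonal k,
    v.1 ^ ij.1 * v.2 ^ ij.2 / (ij.1.factorial * ij.2.factorial) * pd ij.1 ij.2 φ p

theorem taylorWithinEval_comp_add_smul {m : ℕ} {φ : ℝ × ℝ → ℝ} (hφ : ContDiff ℝ m φ)
    (p v : ℝ × ℝ) :
    taylorWithinEval (fun t : ℝ => φ (p + t • v)) m (Set.uIcc 0 1) 0 1 = taylorEval₂ m φ p v := by
  rw [taylor_within_apply]
  refine sum_congr rfl fun k hk => ?_
  have hk : k ≤ m := Nat.lt_succ_iff.1 (mem_range.1 hk)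
  have hcd : ContDiff ℝ k φ := hφ.of_le (by exact_mod_cast hk)
  have hline : ContDiff ℝ k fun t : ℝ => φ (p + t • v) := hcd.comp (by fun_prop)
  rw [iteratedDerivWithin_eq_iteratedDeriv (uniqueDiffOn_uIcc zero_ne_one) hline.contDiffAt
      (by simp)]
  simpa [div_eq_inv_mul] using iteratedDeriv_comp_add_smul_div_factorial hcd p v 0

theorem abs_sub_taylorEval₂_le {m : ℕ} {φ : ℝ × ℝ → ℝ} (hφ : ContDiff ℝ (m + 1 : ℕ) φ) {M : ℝ}
    (hM : ∀ a b : ℕ, a + b = m + 1 → ∀ p, |pd a b φ p| ≤ M) (p v : ℝ × ℝ) {D : ℝ}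
    (hD₁ : |v.1| ≤ D) (hD₂ : |v.2| ≤ D) :
    |φ (p + v) - taylorEval₂ m φ p v| ≤
      (∑ ij ∈ antidiagonal (m + 1), 1 / (ij.1.factorial * ij.2.factorial : ℝ)) * M *
        D ^ (m + 1) := by
  have hD : 0 ≤ D := (abs_nonneg _).trans hD₁
  obtain ⟨ξ, -, hξ⟩ := taylor_mean_remainder_lagrange_iteratedDeriv (zero_ne_one' ℝ) (n := m)
    (f := fun t : ℝ => φ (p + t • v)) (hφ.comp (by fun_prop)).contDiffOn
  rw [taylorWithinEval_comp_add_smul (hφ.of_le (by norm_cast; omega)), one_smul, sub_zero,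
    one_pow, mul_one, iteratedDeriv_comp_add_smul_div_factorial hφ] at hξ
  rw [hξ, sum_mul, sum_mul]
  refine (abs_sum_le_sum_abs _ _).trans (sum_le_sum fun ij hij => ?_)
  have hpos : (0 : ℝ) < ij.1.factorial * ij.2.factorial := by positivity
  calc |v.1 ^ ij.1 * v.2 ^ ij.2 / (ij.1.factorial * ij.2.factorial) * pd ij.1 ij.2 φ (p + ξ • v)|
      = |v.1| ^ ij.1 * |v.2| ^ ij.2 / (ij.1.factorial * ij.2.factorial) *
          |pd ij.1 ij.2 φ (p + ξ • v)| := by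
        rw [abs_mul, abs_div, abs_mul, abs_pow, abs_pow, abs_of_pos hpos]
    _ ≤ D ^ ij.1 * D ^ ij.2 / (ij.1.factorial * ij.2.factorial) * M := by
        gcongr
        exact hM _ _ (HasAntidiagonal.mem_antidiagonal.1 hij) _
    _ = 1 / (ij.1.factorial * ij.2.factorial) * M * D ^ (m + 1) := by
        rw [← HasAntidiagonal.mem_antidiagonal.1 hij, pow_add]
        ring

theorem abs_sum_mul_le_mul_sum_abs {ι : Type*} (s : Finset ι) (Γ c : ι → ℝ) {E : ℝ}
    (hc : ∀ i, |c i| ≤ E) :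
    |∑ i ∈ s, Γ i * c i| ≤ E * ∑ i ∈ s, |Γ i| := by
  rw [mul_sum]
  refine (abs_sum_le_sum_abs _ _).trans (sum_le_sum fun i _ => ?_)
  rw [abs_mul, mul_comm]
  exact mul_le_mul_of_nonneg_right (hc i) (abs_nonneg _)

section Weights

variable {ι : Type*} [Fintype ι] [DecidableEq ι]

theorem sum_erase_le_div_of_le {w d : ι → ℝ} {i : ι} {c : ℝ} (hc : 0 < c)
    (hw : ∀ j ≠ i, 0 ≤ w j) (hd : ∀ j ≠ i, w j ≠ 0 → c ≤ d j) (hdi : d i = 0) :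
    ∑ j ∈ univ.erase i, w j ≤ (∑ j, w j * d j) / c := by
  rw [le_div_iff₀ hc, ← add_sum_erase _ _ (mem_univ i), hdi, mul_zero, zero_add, sum_mul]
  refine sum_le_sum fun j hj => ?_
  have hji := ne_of_mem_erase hj
  rcases eq_or_ne (w j) 0 with h0 | h0
  · simp [h0]
  · exact mul_le_mul_of_nonneg_left (hd j hji h0) (hw j hji)

theorem abs_sum_mul_le_sum_erase_mul {w e : ι → ℝ} {i : ι} {E : ℝ} (hw : ∀ j ≠ i, 0 ≤ w j)
    (hei : e i = 0) (he : ∀ j ≠ i, w j ≠ 0 → |e j| ≤ E) :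
    |∑ j, w j * e j| ≤ (∑ j ∈ univ.erase i, w j) * E := by
  rw [← add_sum_erase _ _ (mem_univ i), hei, mul_zero, zero_add, sum_mul]
  refine (abs_sum_le_sum_abs _ _).trans (sum_le_sum fun j hj => ?_)
  have hji := ne_of_mem_erase hj
  rcases eq_or_ne (w j) 0 with h0 | h0
  · simp [h0]
  · rw [abs_mul, abs_of_nonneg (hw j hji)]
    exact mul_le_mul_of_nonneg_left (he j hji h0) (hw j hji)

theorem abs_sum_mul_le_of_sum_eq_zero {w g : ι → ℝ} {i : ι} {B : ℝ} (hsum : ∑ j, w j = 0)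
    (hw : ∀ j ≠ i, 0 ≤ w j) (hg : ∀ j, |g j| ≤ B) :
    |∑ j, w j * g j| ≤ (∑ j ∈ univ.erase i, w j) * (2 * B) := by
  have hcentred : ∑ j, w j * g j = ∑ j, w j * (g j - g i) := by
    simp [mul_sub, sum_sub_distrib, ← sum_mul, hsum]
  rw [hcentred]
  exact abs_sum_mul_le_sum_erase_mul hw (sub_self _) fun j _ _ =>
    (abs_sub _ _).trans (by linarith [hg j, hg i])

theorem abs_sum_mul_sub_sum_sdiff_mul_le {Γ a b : ι → ℝ} (I : Finset ι) {E₁ E₂ : ℝ}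
    (hab : ∀ i, |a i - b i| ≤ E₁) (hb : ∀ i, |b i| ≤ E₂) :
    |∑ i, Γ i * a i - ∑ i ∈ univ \ I, Γ i * b i| ≤ E₁ * ∑ i, |Γ i| + E₂ * ∑ i ∈ I, |Γ i| := by
  have hsplit : ∑ i, Γ i * a i - ∑ i ∈ univ \ I, Γ i * b i =
      ∑ i, Γ i * (a i - b i) + ∑ i ∈ I, Γ i * b i := by
    simp only [sum_sdiff_eq_sub (subset_univ I), mul_sub, sum_sub_distrib]
    ring
  rw [hsplit]
  exact (abs_add_le _ _).trans (add_le_add (abs_sum_mul_le_mul_sum_abs _ _ _ hab)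
    (abs_sum_mul_le_mul_sum_abs _ _ _ hb))

end Weights

section Stencil

variable {ι : Type*} [Fintype ι] {x : ι → ℝ × ℝ} {w : ι → ℝ} {i : ι}

theorem stencil_sum_taylorEval₂ {n : ℕ} (hn : 1 ≤ n) (φ : ℝ × ℝ → ℝ)
    (hmom : ∀ a b : ℕ, a + b ≤ n + 1 → a + b ≠ 2 →
      ∑ j, w j * ((x j).1 - (x i).1) ^ a * ((x j).2 - (x i).2) ^ b = 0)
    (hxx : ∑ j, w j * ((x j).1 - (x i).1) ^ 2 = 2) (hyy : ∑ j, w j * ((x j).2 - (x i).2) ^ 2 = 2)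
    (hxy : ∑ j, w j * (((x j).1 - (x i).1) * ((x j).2 - (x i).2)) = 0) :
    ∑ j, w j * taylorEval₂ (n + 1) φ (x i) (x j - x i) = pd 2 0 φ (x i) + pd 0 2 φ (x i) := by
  have hswap : ∑ j, w j * taylorEval₂ (n + 1) φ (x i) (x j - x i) =
      ∑ k ∈ range (n + 2), ∑ ij ∈ antidiagonal k,
        pd ij.1 ij.2 φ (x i) / (ij.1.factorial * ij.2.factorial) *
          ∑ j, w j * ((x j).1 - (x i).1) ^ ij.1 * ((x j).2 - (x i).2) ^ ij.2 := by
    simp only [taylorEval₂, mul_sum, Prod.fst_sub, Prod.snd_sub]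
    rw [sum_comm]
    refine sum_congr rfl fun k _ => ?_
    rw [sum_comm]
    exact sum_congr rfl fun ij _ => sum_congr rfl fun j _ => by ring
  rw [hswap, sum_eq_single_of_mem 2 (mem_range.2 (by omega))]
  · have hxy' : ∑ j, w j * ((x j).1 - (x i).1) * ((x j).2 - (x i).2) = 0 := by
      simpa only [mul_assoc] using hxy
    rw [Nat.sum_antidiagonal_eq_sum_range_succ_mk]
    simp only [sum_range_succ, sum_range_zero]
    norm_num [hxx, hyy, hxy']
    ring
  · intro k hk hk2
    refine sum_eq_zero fun ij hij => ?_
    have hsum := HasAntidiagonal.mem_antidiagonal.1 hij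
    rw [hmom _ _ (by rw [hsum]; exact Nat.lt_succ_iff.1 (mem_range.1 hk)) (hsum ▸ hk2), mul_zero]

variable [DecidableEq ι]

theorem stencil_mass_le {ρ : ℝ} (hρ : 0 < ρ) (hw : ∀ j ≠ i, 0 ≤ w j)
    (hin : ∀ j ≠ i, w j ≠ 0 → ρ ≤ √(((x j).1 - (x i).1) ^ 2 + ((x j).2 - (x i).2) ^ 2))
    (hxx : ∑ j, w j * ((x j).1 - (x i).1) ^ 2 = 2) (hyy : ∑ j, w j * ((x j).2 - (x i).2) ^ 2 = 2) :
    ∑ j ∈ univ.erase i, w j ≤ 4 / ρ ^ 2 := by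
  have hsecond : ∑ j, w j * (((x j).1 - (x i).1) ^ 2 + ((x j).2 - (x i).2) ^ 2) = 4 := by
    simp only [mul_add, sum_add_distrib, hxx, hyy]
    norm_num
  rw [← hsecond]
  exact sum_erase_le_div_of_le (by positivity) hw
    (fun j hj h0 => (Real.le_sqrt hρ.le (by positivity)).1 (hin j hj h0)) (by simp)

theorem abs_laplacian_sub_stencil_le {n : ℕ} (hn : 1 ≤ n) {φ : ℝ × ℝ → ℝ}
    (hφ : ContDiff ℝ (n + 2 : ℕ) φ) {M : ℝ} (hM : ∀ a b : ℕ, a + b = n + 2 → ∀ p, |pd a b φ p| ≤ M)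
    {ρ : ℝ}
    (hmom : ∀ a b : ℕ, a + b ≤ n + 1 → a + b ≠ 2 →
      ∑ j, w j * ((x j).1 - (x i).1) ^ a * ((x j).2 - (x i).2) ^ b = 0)
    (hxx : ∑ j, w j * ((x j).1 - (x i).1) ^ 2 = 2) (hyy : ∑ j, w j * ((x j).2 - (x i).2) ^ 2 = 2)
    (hxy : ∑ j, w j * (((x j).1 - (x i).1) * ((x j).2 - (x i).2)) = 0) (hw : ∀ j ≠ i, 0 ≤ w j)
    (hout : ∀ j ≠ i, w j ≠ 0 → √(((x j).1 - (x i).1) ^ 2 + ((x j).2 - (x i).2) ^ 2) ≤ ρ) :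
    |pd 2 0 φ (x i) + pd 0 2 φ (x i) - ∑ j, w j * φ (x j)| ≤
      (∑ j ∈ univ.erase i, w j) *
        ((∑ ij ∈ antidiagonal (n + 2), 1 / (ij.1.factorial * ij.2.factorial : ℝ)) * M *
          ρ ^ (n + 2)) := by
  set e : ι → ℝ := fun j => φ (x j) - taylorEval₂ (n + 1) φ (x i) (x j - x i)
  have hsplit : pd 2 0 φ (x i) + pd 0 2 φ (x i) - ∑ j, w j * φ (x j) = -∑ j, w j * e j := by
    rw [← stencil_sum_taylorEval₂ hn φ hmom hxx hyy hxy]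
    simp only [e, mul_sub, sum_sub_distrib]
    ring
  rw [hsplit, abs_neg]
  refine abs_sum_mul_le_sum_erase_mul hw ?_ fun j hj h0 => ?_
  · -- `e i = 0`: the Taylor bound with zero increment
    simpa [e] using abs_sub_taylorEval₂_le hφ hM (x i) 0 (D := 0) (by simp) (by simp)
  · have hdist := hout j hj h0
    simpa [e] using abs_sub_taylorEval₂_le hφ hM (x i) (x j - x i)
      ((Real.abs_le_sqrt (by rw [Prod.fst_sub]; exact le_add_of_nonneg_right (sq_nonneg _))).trans
        hdist)
      ((Real.abs_le_sqrt (by rw [Prod.snd_sub]; exact le_add_of_nonneg_left (sq_nonneg _))).trans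
        hdist)

end Stencil

theorem stmt_19_general {N : ℕ} (n : ℕ) (hn : n = 1 ∨ n = 2)
    (x : Fin N → ℝ × ℝ) (f : Fin N → Fin N → ℝ) (Γ : Fin N → ℝ)
    (I : Finset (Fin N)) (Cdiff : ℝ)
    (r R h : ℝ) (hr : 0 < r) (hR : 0 < R) (hh : 0 < h)
    (hI : ∑ i ∈ I, |Γ i| ≤ Cdiff * h^(n + 2) * ∑ i, |Γ i|)
    (φ : ℝ × ℝ → ℝ) (hφ : ContDiff ℝ (n + 2 : ℕ) φ)
    (M : ℝ) (hM : ∀ a b : ℕ, a + b = n + 2 → ∀ p, |pd a b φ p| ≤ M)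
    (B : ℝ) (hB : ∀ p, |φ p| ≤ B)
    (hmom : ∀ i, ∀ a b : ℕ, a + b ≤ n + 1 → a + b ≠ 2 →
      ∑ j, f i j * ((x j).1 - (x i).1)^a * ((x j).2 - (x i).2)^b = 0)
    (hxx : ∀ i, ∑ j, f i j * ((x j).1 - (x i).1)^2 = 2)
    (hyy : ∀ i, ∑ j, f i j * ((x j).2 - (x i).2)^2 = 2)
    (hxy : ∀ i, ∑ j, f i j * (((x j).1 - (x i).1) * ((x j).2 - (x i).2)) = 0)
    (hnonneg : ∀ i j, j ≠ i → 0 ≤ f i j)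
    (hsupp : ∀ i j, j ≠ i → f i j ≠ 0 →
      r * h ≤ Real.sqrt (((x j).1 - (x i).1)^2 + ((x j).2 - (x i).2)^2) ∧
      Real.sqrt (((x j).1 - (x i).1)^2 + ((x j).2 - (x i).2)^2) ≤ R * h) :
    |∑ i, Γ i * (pd 2 0 φ (x i) + pd 0 2 φ (x i)) -
        ∑ i ∈ Finset.univ \ I, ∑ j, Γ i * f i j * φ (x j)| ≤
      (4 * (∑ a ∈ Finset.range (n + 3),
              1 / ((a.factorial : ℝ) * ((n + 2 - a).factorial))) *
          (R^(n + 2) / r^2) * M +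
        8 * Cdiff / r^2 * B) * h^n * ∑ i, |Γ i| := by
  have hM0 : 0 ≤ M := (abs_nonneg _).trans (hM 0 (n + 2) (zero_add _) 0)
  have hB0 : 0 ≤ B := (abs_nonneg _).trans (hB 0)
  set Cα := ∑ ij ∈ antidiagonal (n + 2), 1 / (ij.1.factorial * ij.2.factorial : ℝ) with hCα
  have hmass : ∀ i, ∑ j ∈ univ.erase i, f i j ≤ 4 / (r * h) ^ 2 := fun i =>
    stencil_mass_le (mul_pos hr hh) (hnonneg i) (fun j hj h0 => (hsupp i j hj h0).1) (hxx i) (hyy i)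
  have hconsistent : ∀ i, |pd 2 0 φ (x i) + pd 0 2 φ (x i) - ∑ j, f i j * φ (x j)| ≤
      4 / (r * h) ^ 2 * (Cα * M * (R * h) ^ (n + 2)) := fun i =>
    (abs_laplacian_sub_stencil_le (by omega) hφ hM (hmom i) (hxx i) (hyy i) (hxy i) (hnonneg i)
      fun j hj h0 => (hsupp i j hj h0).2).trans (by gcongr; exact hmass i)
  have hexcluded : ∀ i, |∑ j, f i j * φ (x j)| ≤ 4 / (r * h) ^ 2 * (2 * B) := fun i =>
    (abs_sum_mul_le_of_sum_eq_zero (by simpa using hmom i 0 0 (by omega) (by omega)) (hnonneg i)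
      fun j => hB (x j)).trans (by gcongr; exact hmass i)
  simp_rw [mul_assoc (Γ _), ← mul_sum]
  calc _ ≤ 4 / (r * h) ^ 2 * (Cα * M * (R * h) ^ (n + 2)) * ∑ i, |Γ i| +
        4 / (r * h) ^ 2 * (2 * B) * ∑ i ∈ I, |Γ i| :=
      abs_sum_mul_sub_sum_sdiff_mul_le I hconsistent hexcluded
    _ ≤ 4 / (r * h) ^ 2 * (Cα * M * (R * h) ^ (n + 2)) * ∑ i, |Γ i| +
        4 / (r * h) ^ 2 * (2 * B) * (Cdiff * h ^ (n + 2) * ∑ i, |Γ i|) := by gcongr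
    _ = _ := by
      rw [hCα,
        Nat.sum_antidiagonal_eq_sum_range_succ fun a b => 1 / (a.factorial * b.factorial : ℝ)]
      field_simp
      ring

/-- The reduced discrete Laplacian retains the `O(hⁿ)` order of
consistency when the excluded circulation satisfies
`∑_{i∈I} |Γ_i| ≤ C_diff h^{n+2} ∑_i |Γ_i|`. -/
theorem stmt_19 {N : ℕ} (n : ℕ) (hn : n = 1 ∨ n = 2)
    (x : Fin N → ℝ × ℝ) (f : Fin N → Fin N → ℝ) (Γ : Fin N → ℝ)
    (I : Finset (Fin N)) (Cdiff : ℝ) (hCdiff : 0 < Cdiff)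
    (r R h : ℝ) (hr : 0 < r) (hR : 0 < R) (hh : 0 < h)
    (hI : ∑ i ∈ I, |Γ i| ≤ Cdiff * h^(n + 2) * ∑ i, |Γ i|)
    (φ : ℝ × ℝ → ℝ) (hφ : ContDiff ℝ (n + 2 : ℕ) φ)
    (M : ℝ) (hM : ∀ a b : ℕ, a + b = n + 2 → ∀ p, |pd a b φ p| ≤ M)
    (B : ℝ) (hB : ∀ p, |φ p| ≤ B)
    (hmom : ∀ i, ∀ a b : ℕ, a + b ≤ n + 1 → a + b ≠ 2 →
      ∑ j, f i j * ((x j).1 - (x i).1)^a * ((x j).2 - (x i).2)^b = 0)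
    (hxx : ∀ i, ∑ j, f i j * ((x j).1 - (x i).1)^2 = 2)
    (hyy : ∀ i, ∑ j, f i j * ((x j).2 - (x i).2)^2 = 2)
    (hxy : ∀ i, ∑ j, f i j * (((x j).1 - (x i).1) * ((x j).2 - (x i).2)) = 0)
    (hnonneg : ∀ i j, j ≠ i → 0 ≤ f i j)
    (hsupp : ∀ i j, j ≠ i → f i j ≠ 0 →
      r * h ≤ Real.sqrt (((x j).1 - (x i).1)^2 + ((x j).2 - (x i).2)^2) ∧
      Real.sqrt (((x j).1 - (x i).1)^2 + ((x j).2 - (x i).2)^2) ≤ R * h) :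
    |∑ i, Γ i * (pd 2 0 φ (x i) + pd 0 2 φ (x i)) -
        ∑ i ∈ Finset.univ \ I, ∑ j, Γ i * f i j * φ (x j)| ≤
      (4 * (∑ a ∈ Finset.range (n + 3),
              1 / ((a.factorial : ℝ) * ((n + 2 - a).factorial))) *
          (R^(n + 2) / r^2) * M +
        8 * Cdiff / r^2 * B) * h^n * ∑ i, |Γ i| :=
  stmt_19_general n hn x f Γ I Cdiff r R h hr hR hh hI φ hφ M hM B hB hmom hxx hyy hxy hnonneg hsupp
end
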